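/- Fix any b-coloring of the constructed graph H with k colors, and define an orientation of G as follows: for each edge e = uv of G, orient e towards u if x_{e,u} is a b-vertex, and towards v if x_{e,v} is a b-vertex (exactly one of the two occurs). Then for every vertex v of G, the total weight of edges oriented towards v in this orientation equals (1/2)W_v; in particular, this orientation is circulating. -/

import Mathlib

open Finset

/-- `a` is a b-vertex of the coloring `c`: it has a neighbor in every color class
other than its own. -/
def IsBVertex {VH : Type*} (H : SimpleGraph VH) {k : ℕ} (c : VH → Fin k) (a : VH) : Prop :=
  ∀ col : Fin k, col ≠ c a → ∃ b : VH, H.Adj a b ∧ c b = col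

/-- `c` is a b-coloring of `H` with `k` colors: a proper coloring using all `k` colors
in which every color class contains a b-vertex. -/
def IsBColoring {VH : Type*} (H : SimpleGraph VH) (k : ℕ) (c : VH → Fin k) : Prop :=
  (∀ ⦃a b : VH⦄, H.Adj a b → c a ≠ c b) ∧ Function.Surjective c ∧
    ∀ col : Fin k, ∃ a : VH, c a = col ∧ IsBVertex H c a

variable {V : Type*} [Fintype V] [DecidableEq V]

/-- `W`, the total weight of all edges. -/
def totW (G : SimpleGraph V) [DecidableRel G.Adj] (wt : Sym2 V → ℕ) : ℕ :=
  ∑ e ∈ G.edgeFinset, wt e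

/-- `W_v`, the total weight of the edges incident with `v`. -/
def vertW (G : SimpleGraph V) [DecidableRel G.Adj] (wt : Sym2 V → ℕ) (v : V) : ℕ :=
  ∑ e ∈ G.edgeFinset.filter (fun e => v ∈ e), wt e

/-- `k = 2W + 3m + n + 2`. -/
def numColors (G : SimpleGraph V) [DecidableRel G.Adj] (wt : Sym2 V → ℕ) : ℕ :=
  2 * totW G wt + 3 * G.edgeFinset.card + Fintype.card V + 2

/-- An orientation of `(G, wt)` (given by choosing a head `o e ∈ e` for every edge `e`)
is circulating if, at every vertex, the entering weight equals the leaving weight. -/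
def IsCirculating (G : SimpleGraph V) [DecidableRel G.Adj] (wt : Sym2 V → ℕ)
    (o : Sym2 V → V) : Prop :=
  (∀ e ∈ G.edgeFinset, o e ∈ e) ∧
    ∀ v : V,
      ∑ e ∈ G.edgeFinset.filter (fun e => v ∈ e ∧ o e = v), wt e =
        ∑ e ∈ G.edgeFinset.filter (fun e => v ∈ e ∧ o e ≠ v), wt e

/-- The data of the construction of the graph `H` from `(G, wt)`. -/
structure GadgetData (V : Type*) [Fintype V] [DecidableEq V]
    (G : SimpleGraph V) [DecidableRel G.Adj] (wt : Sym2 V → ℕ) where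
  /-- the vertex type of `H` -/
  VH : Type*
  fintypeVH : Fintype VH
  decEqVH : DecidableEq VH
  /-- the graph `H` -/
  H : SimpleGraph VH
  decAdj : DecidableRel H.Adj
  /-- the center `s*` of the superstar -/
  sstar : VH
  /-- the leaves of the superstar -/
  Sleaves : Finset VH
  /-- the centers of the anonymous stars -/
  Acenters : Finset VH
  /-- the leaves of each anonymous star -/
  Aleaves : VH → Finset VH
  /-- the sets `L_{e,v}` (subsets of the superstar leaves) -/
  L : Sym2 V → V → Finset VH
  /-- the copy of a vertex of `G` inside `H` -/
  orig : V → VH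
  /-- the sets `P_v` -/
  P : V → Finset VH
  /-- the vertices `x_{e,v}` -/
  x : Sym2 V → V → VH
  /-- the sets `Y_e` -/
  Y : Sym2 V → Finset VH
  /-- the sets `Z_e` -/
  Z : Sym2 V → Finset VH
  /-- the vertices `q_{e,1}, q_{e,2}` -/
  q : Sym2 V → Fin 2 → VH

namespace GadgetData

variable {G : SimpleGraph V} [DecidableRel G.Adj] {wt : Sym2 V → ℕ}

/-- The set `X = {x_{e,v} : v ∈ e ∈ E(G)}`. -/
def Xset (g : GadgetData V G wt) : Finset g.VH :=
  letI := g.fintypeVH; letI := g.decEqVH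
  G.edgeFinset.biUnion fun e => (Finset.univ.filter fun v => v ∈ e).image (g.x e)

/-- The set `Q = {q_{e,1}, q_{e,2} : e ∈ E(G)}`. -/
def Qset (g : GadgetData V G wt) : Finset g.VH :=
  letI := g.decEqVH
  G.edgeFinset.biUnion fun e => {g.q e 0, g.q e 1}

/-- The parts into which the vertex set of `H` is partitioned. -/
def parts (g : GadgetData V G wt) : List (Finset g.VH) :=
  letI := g.fintypeVH; letI := g.decEqVH
  [{g.sstar}, g.Sleaves, g.Acenters, g.Acenters.biUnion g.Aleaves,
    Finset.univ.image g.orig, Finset.univ.biUnion g.P,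
    g.Xset, G.edgeFinset.biUnion g.Y, G.edgeFinset.biUnion g.Z, g.Qset]

/-- One directional specification of the adjacencies of `H`. -/
def AdjSpec (g : GadgetData V G wt) (a b : g.VH) : Prop :=
  (a = g.sstar ∧ b ∈ g.Sleaves) ∨
  (∃ s ∈ g.Acenters, a = s ∧ b ∈ g.Aleaves s) ∨
  (∃ v : V, a = g.orig v ∧ b ∈ g.P v) ∨
  (∃ e ∈ G.edgeFinset, ∃ v : V, v ∈ e ∧ a = g.orig v ∧ (b ∈ g.L e v ∨ b ∈ g.Y e)) ∨
  (∃ e ∈ G.edgeFinset, ∃ v : V, v ∈ e ∧ a = g.x e v ∧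
    (b ∈ g.Y e ∨ b ∈ g.Z e ∨ b ∈ g.L e v)) ∨
  (∃ e ∈ G.edgeFinset, a = g.q e 0 ∧ b = g.q e 1) ∨
  (∃ e ∈ G.edgeFinset, ∃ h : Fin 2, a = g.q e h ∧
    (b ∈ g.Z e ∨ (∃ v : V, v ∈ e ∧ b ∈ g.L e v) ∨ (∃ v : V, v ∈ e ∧ b = g.x e v)))

/-- Degree in `H`. -/
def deg (g : GadgetData V G wt) (a : g.VH) : ℕ :=
  letI := g.fintypeVH; letI := g.decEqVH; letI := g.decAdj
  g.H.degree a

/-- The set `{s*} ∪ V(G) ∪ Q ∪ A ∪ X`. -/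
def bigSet (g : GadgetData V G wt) : Finset g.VH :=
  letI := g.fintypeVH; letI := g.decEqVH
  {g.sstar} ∪ Finset.univ.image g.orig ∪ g.Qset ∪ g.Acenters ∪ g.Xset

end GadgetData

/-- The construction of the graph `H` from `(G, wt)`: the data together with all the
requirements (sizes of the parts, their disjointness, and the adjacency relation). -/
structure Gadget (V : Type*) [Fintype V] [DecidableEq V]
    (G : SimpleGraph V) [DecidableRel G.Adj] (wt : Sym2 V → ℕ)
    extends GadgetData V G wt where
  card_Sleaves : Sleaves.card = numColors G wt - 1
  card_Acenters : Acenters.card = 2 * totW G wt + 1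
  card_Aleaves : ∀ s ∈ Acenters, (Aleaves s).card = numColors G wt - 1
  Aleaves_disjoint : ∀ s ∈ Acenters, ∀ s' ∈ Acenters, s ≠ s' →
    Disjoint (Aleaves s) (Aleaves s')
  L_subset : ∀ e ∈ G.edgeFinset, ∀ v ∈ e, L e v ⊆ Sleaves
  card_L : ∀ e ∈ G.edgeFinset, ∀ v ∈ e, (L e v).card = wt e
  L_disjoint : ∀ e ∈ G.edgeFinset, ∀ v ∈ e, ∀ e' ∈ G.edgeFinset, ∀ v' ∈ e',
    (e, v) ≠ (e', v') → Disjoint (L e v) (L e' v')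
  card_P : ∀ v : V, 2 * (P v).card + 3 * vertW G wt v + 2 = 2 * numColors G wt
  card_Y : ∀ e ∈ G.edgeFinset, (Y e).card = wt e
  card_Z : ∀ e ∈ G.edgeFinset, (Z e).card + 2 * wt e + 3 = numColors G wt
  orig_inj : Function.Injective orig
  P_disjoint : ∀ v v' : V, v ≠ v' → Disjoint (P v) (P v')
  x_inj : ∀ e ∈ G.edgeFinset, ∀ v ∈ e, ∀ e' ∈ G.edgeFinset, ∀ v' ∈ e',
    x e v = x e' v' → (e, v) = (e', v')
  Y_disjoint : ∀ e ∈ G.edgeFinset, ∀ e' ∈ G.edgeFinset, e ≠ e' → Disjoint (Y e) (Y e')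
  Z_disjoint : ∀ e ∈ G.edgeFinset, ∀ e' ∈ G.edgeFinset, e ≠ e' → Disjoint (Z e) (Z e')
  q_inj : ∀ e ∈ G.edgeFinset, ∀ h : Fin 2, ∀ e' ∈ G.edgeFinset, ∀ h' : Fin 2,
    q e h = q e' h' → (e, h) = (e', h')
  parts_disjoint : toGadgetData.parts.Pairwise Disjoint
  parts_cover : ∀ a : VH, ∃ p ∈ toGadgetData.parts, a ∈ p
  adj_iff : ∀ a b : VH, H.Adj a b ↔
    toGadgetData.AdjSpec a b ∨ toGadgetData.AdjSpec b a

/-!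
Every vertex of `H` has a unique role (its part, refined by its index inside the part), and
adjacency in `H` only depends on roles. A vertex outside `{s*} ∪ V(G) ∪ Q ∪ A ∪ X` has at most five
neighbours, so it is not a b-vertex as `k ≥ 7`: the `k` b-vertices of distinct colours lie in this
set of `k + m` vertices. For each edge `e = uv` one of `x_{e,u}, x_{e,v}, q_{e,1}, q_{e,2}` is not
a b-vertex: otherwise the neighbourhoods of `x_{e,u}` and `x_{e,v}`, having only `k - 1` vertices,
are rainbow, and this forces two disjoint colour repetitions among the `k` neighbours of `q_{e,1}`.
Counting again, every vertex of `G` and, for each edge `e`, some `q_{e,h}` are b-vertices.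

The `k - 1` colours around `v` then appear on `P_v` and on the sets `L_{e,v} ∪ Y_e`. Such a set
carries at most `w(e)` colours when `e` is oriented away from `v` (as seen from the b-vertex
`q_{e,h}`, every colour of `Y_e` reappears on `L_{e,v}`) and at most `2w(e)` otherwise. Since
`|P_v| = k - 3W_v/2 - 1`, this gives `W_v ≤ 2 in(v)`; summed over `v` both sides equal `2W`, so
equality holds at every vertex.
-/

lemma Sym2.card_toFinset_le_two {α : Type*} [DecidableEq α] (z : Sym2 α) : #z.toFinset ≤ 2 := by
  rw [Sym2.card_toFinset]; split_ifs <;> norm_num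

lemma SimpleGraph.exists_adj_of_mem_edgeFinset {V : Type*} {G : SimpleGraph V} [Fintype G.edgeSet]
    {e : Sym2 V} (he : e ∈ G.edgeFinset) : ∃ u v, G.Adj u v ∧ e = s(u, v) := by
  induction e using Sym2.ind with
  | _ u v => exact ⟨u, v, G.mem_edgeFinset.1 he, rfl⟩

lemma seven_le_numColors {V : Type*} [Fintype V] {G : SimpleGraph V} [DecidableRel G.Adj]
    {wt : Sym2 V → ℕ} {e : Sym2 V} (he : e ∈ G.edgeFinset) : 7 ≤ numColors G wt := by
  obtain ⟨u, v, huv, -⟩ := SimpleGraph.exists_adj_of_mem_edgeFinset he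
  have hm : 1 ≤ #G.edgeFinset := card_pos.2 ⟨e, he⟩
  have hn : 1 < Fintype.card V := Fintype.one_lt_card_iff.2 ⟨u, v, huv.ne⟩
  unfold numColors
  omega

lemma Finset.card_image_add_two_le {α β : Type*} [DecidableEq α] [DecidableEq β]
    {s : Finset α} {f : α → β} {a₁ b₁ a₂ b₂ : α} (ha₁ : a₁ ∈ s) (hb₁ : b₁ ∈ s)
    (ha₂ : a₂ ∈ s) (hb₂ : b₂ ∈ s) (h₁ : a₁ ≠ b₁) (h₂ : a₂ ≠ b₂) (ha₂b₁ : a₂ ≠ b₁)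
    (hb₂b₁ : b₂ ≠ b₁) (hf₁ : f a₁ = f b₁) (hf₂ : f a₂ = f b₂) :
    #(s.image f) + 2 ≤ #s := by
  have himage : (s.erase b₁).image f = s.image f := by
    refine (image_subset_image (erase_subset _ _)).antisymm fun y hy => ?_
    obtain ⟨z, hz, rfl⟩ := mem_image.1 hy
    by_cases hzb : z = b₁
    · exact mem_image.2 ⟨a₁, mem_erase.2 ⟨h₁, ha₁⟩, hzb ▸ hf₁⟩
    · exact mem_image_of_mem f (mem_erase.2 ⟨hzb, hz⟩)
  have hlt : #((s.erase b₁).image f) < #(s.erase b₁) :=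
    card_image_le.lt_of_ne fun h => h₂ <|
      card_image_iff.1 h (mem_erase.2 ⟨ha₂b₁, ha₂⟩) (mem_erase.2 ⟨hb₂b₁, hb₂⟩) hf₂
  rw [himage, card_erase_of_mem hb₁] at hlt
  omega

section BVertex

variable {W : Type*} {H : SimpleGraph W} {k : ℕ} {c : W → Fin k} {a : W}
  {T : Finset W}

lemma IsBVertex.card_sub_one_le (hb : IsBVertex H c a) (hT : ∀ b, H.Adj a b → b ∈ T) :
    k - 1 ≤ #(T.image c) :=
  calc k - 1 = #(univ.erase (c a)) := by simp [card_erase_of_mem]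
    _ ≤ #(T.image c) := card_le_card fun col hcol => by
      obtain ⟨b, hab, rfl⟩ := hb col (ne_of_mem_erase hcol)
      exact mem_image_of_mem c (hT b hab)

lemma IsBVertex.injOn (hb : IsBVertex H c a) (hT : ∀ b, H.Adj a b → b ∈ T)
    (hcard : #T ≤ k - 1) : Set.InjOn c T :=
  card_image_iff.1 (card_image_le.antisymm (hcard.trans (hb.card_sub_one_le hT)))

end BVertex

section Orientation

variable (G : SimpleGraph V) [DecidableRel G.Adj] (wt : Sym2 V → ℕ) (o : Sym2 V → V)

def inWeight (v : V) : ℕ := ∑ e ∈ G.edgeFinset.filter (fun e => v ∈ e ∧ o e = v), wt e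

def outWeight (v : V) : ℕ := ∑ e ∈ G.edgeFinset.filter (fun e => v ∈ e ∧ o e ≠ v), wt e

lemma sum_vertW : ∑ v, vertW G wt v = 2 * totW G wt := by
  simp only [vertW, totW, mul_sum]
  rw [sum_comm' (t' := G.edgeFinset) (s' := fun e => univ.filter (· ∈ e))
    (fun v e => by simp only [mem_filter, mem_univ, true_and]; tauto)]
  refine sum_congr rfl fun e he => ?_
  have : univ.filter (· ∈ e) = e.toFinset := by ext; simp [Sym2.mem_toFinset]
  rw [sum_const, this, Sym2.card_toFinset_of_not_isDiag _
    (G.not_isDiag_of_mem_edgeSet (SimpleGraph.mem_edgeFinset.1 he)), smul_eq_mul]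

lemma sum_inWeight (ho : ∀ e ∈ G.edgeFinset, o e ∈ e) : ∑ v, inWeight G wt o v = totW G wt := by
  simp only [inWeight, totW]
  rw [sum_comm' (t' := G.edgeFinset) (s' := fun e => univ.filter (fun v => v ∈ e ∧ o e = v))
    (fun v e => by simp only [mem_filter, mem_univ, true_and]; tauto)]
  refine sum_congr rfl fun e he => ?_
  have : univ.filter (fun v => v ∈ e ∧ o e = v) = {o e} := by
    ext v; simp only [mem_filter, mem_univ, true_and, mem_singleton]
    exact ⟨fun h => h.2.symm, fun h => by subst h; exact ⟨ho e he, rfl⟩⟩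
  rw [this, sum_singleton]

lemma inWeight_add_outWeight (v : V) : inWeight G wt o v + outWeight G wt o v = vertW G wt v := by
  rw [inWeight, outWeight, vertW,
    ← sum_filter_add_sum_filter_not (G.edgeFinset.filter fun e => v ∈ e) (fun e => o e = v),
    filter_filter, filter_filter]

lemma sum_ite_eq_vertW_add_inWeight (v : V) :
    ∑ e ∈ G.edgeFinset.filter (fun e => v ∈ e), (if o e = v then 2 * wt e else wt e) =
      vertW G wt v + inWeight G wt o v := by
  rw [inWeight, vertW, ← filter_filter, sum_filter (fun e => o e = v), ← sum_add_distrib]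
  exact sum_congr rfl fun e _ => by split_ifs <;> ring

lemma two_mul_inWeight_eq (ho : ∀ e ∈ G.edgeFinset, o e ∈ e)
    (hle : ∀ v, vertW G wt v ≤ 2 * inWeight G wt o v) (v : V) :
    2 * inWeight G wt o v = vertW G wt v := by
  have hsum : ∑ v, vertW G wt v = ∑ v, 2 * inWeight G wt o v := by
    rw [← mul_sum, sum_inWeight G wt o ho, sum_vertW]
  exact ((sum_eq_sum_iff_of_le fun v _ => hle v).1 hsum v (mem_univ v)).symm

lemma isCirculating_of_two_mul_inWeight_eq (ho : ∀ e ∈ G.edgeFinset, o e ∈ e)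
    (h : ∀ v, 2 * inWeight G wt o v = vertW G wt v) : IsCirculating G wt o := by
  refine ⟨ho, fun v => show inWeight G wt o v = outWeight G wt o v from ?_⟩
  have := h v
  have := inWeight_add_outWeight G wt o v
  omega

end Orientation

variable {G : SimpleGraph V} [DecidableRel G.Adj] {wt : Sym2 V → ℕ}

instance (g : GadgetData V G wt) : Fintype g.VH := g.fintypeVH
instance (g : GadgetData V G wt) : DecidableEq g.VH := g.decEqVH
instance (g : GadgetData V G wt) : DecidableRel g.H.Adj := g.decAdj

/-- The role of a vertex of `H`: its part in `GadgetData.parts`, together with the index that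
identifies it inside the part. A superstar leaf lying in `L e v` has role `lleaf e v`, the other
superstar leaves have role `sleaf`. -/
inductive GadgetRole (V C : Type*)
  | sstar
  | sleaf
  | lleaf (e : Sym2 V) (v : V)
  | acenter (s : C)
  | aleaf (s : C)
  | orig (v : V)
  | p (v : V)
  | x (e : Sym2 V) (v : V)
  | y (e : Sym2 V)
  | z (e : Sym2 V)
  | q (e : Sym2 V) (h : Fin 2)

namespace GadgetRole

variable {C : Type*}

def part : GadgetRole V C → ℕ
  | sstar => 0
  | sleaf | lleaf _ _ => 1
  | acenter _ => 2
  | aleaf _ => 3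
  | orig _ => 4
  | p _ => 5
  | x _ _ => 6
  | y _ => 7
  | z _ => 8
  | q _ _ => 9

/-- `GadgetData.AdjSpec` read on roles; `HasRole.adj` shows that it governs adjacency in `H`. -/
def Adj : GadgetRole V C → GadgetRole V C → Prop
  | sstar, sleaf | sstar, lleaf _ _ => True
  | acenter s, aleaf t => s = t
  | orig v, p w => v = w
  | orig v, lleaf _ w => v = w
  | orig v, y e => v ∈ e
  | x e _, y f | x e _, z f => e = f
  | x e v, lleaf f w => e = f ∧ v = w
  | q e h, q f h' => e = f ∧ h' = h.rev
  | q e _, z f | q e _, lleaf f _ | q e _, x f _ => e = f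
  | _, _ => False

end GadgetRole

namespace Gadget

variable {g : Gadget V G wt} {c : g.VH → Fin (numColors G wt)} {e : Sym2 V} {u v : V}
  {a b : g.VH} {r r' : GadgetRole V g.VH}

variable (g) in
def HasRole (a : g.VH) : GadgetRole V g.VH → Prop
  | .sstar => a = g.sstar
  | .sleaf => a ∈ g.Sleaves ∧ ∀ e ∈ G.edgeFinset, ∀ v ∈ e, a ∉ g.L e v
  | .lleaf e v => e ∈ G.edgeFinset ∧ v ∈ e ∧ a ∈ g.L e v
  | .acenter s => s ∈ g.Acenters ∧ a = s
  | .aleaf s => s ∈ g.Acenters ∧ a ∈ g.Aleaves s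
  | .orig v => a = g.orig v
  | .p v => a ∈ g.P v
  | .x e v => e ∈ G.edgeFinset ∧ v ∈ e ∧ a = g.x e v
  | .y e => e ∈ G.edgeFinset ∧ a ∈ g.Y e
  | .z e => e ∈ G.edgeFinset ∧ a ∈ g.Z e
  | .q e h => e ∈ G.edgeFinset ∧ a = g.q e h

lemma eq_of_mem_parts {i j : ℕ} (hi : a ∈ g.parts.getD i ∅)
    (hj : a ∈ g.parts.getD j ∅) : i = j := by
  have key : ∀ {i j}, i < j → a ∈ g.parts.getD i ∅ → a ∉ g.parts.getD j ∅ := by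
    intro i j hij hi hj
    have hjl : j < g.parts.length := by
      by_contra h; simp [List.getElem?_eq_none (not_lt.1 h)] at hj
    rw [List.getD_eq_getElem _ _ (hij.trans hjl)] at hi
    rw [List.getD_eq_getElem _ _ hjl] at hj
    exact Finset.disjoint_left.1
      (List.pairwise_iff_getElem.1 g.parts_disjoint i j (hij.trans hjl) hjl hij) hi hj
  rcases lt_trichotomy i j with h | h | h
  exacts [(key h hi hj).elim, h, (key h hj hi).elim]

lemma HasRole.mem_parts (h : g.HasRole a r) :
    a ∈ g.parts.getD r.part ∅ := by
  cases r <;> simp only [HasRole] at h <;>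
    simp [GadgetRole.part, GadgetData.parts, GadgetData.Xset, GadgetData.Qset, h]
  case lleaf e v => exact g.L_subset e h.1 v h.2.1 h.2.2
  case q e i => exact ⟨e, by simpa using h.1, by fin_cases i <;> simp⟩
  all_goals aesop

lemma HasRole.unique (h : g.HasRole a r)
    (h' : g.HasRole a r') : r = r' := by
  have hpart := eq_of_mem_parts h.mem_parts h'.mem_parts
  cases r <;> cases r' <;> simp only [GadgetRole.part] at hpart <;> (try omega) <;>
    simp only [HasRole, GadgetRole.lleaf.injEq, GadgetRole.acenter.injEq,
      GadgetRole.aleaf.injEq, GadgetRole.orig.injEq, GadgetRole.p.injEq, GadgetRole.x.injEq,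
      GadgetRole.y.injEq, GadgetRole.z.injEq, GadgetRole.q.injEq, reduceCtorEq] at h h' ⊢
  case sleaf.lleaf e v => exact h.2 e h'.1 v h'.2.1 h'.2.2
  case lleaf.sleaf e v => exact h'.2 e h.1 v h.2.1 h.2.2
  case lleaf.lleaf e v e' v' =>
    by_contra hne
    exact disjoint_left.1 (g.L_disjoint e h.1 v h.2.1 e' h'.1 v' h'.2.1
      (by rwa [Ne, Prod.mk.injEq])) h.2.2 h'.2.2
  case acenter.acenter => exact h.2.symm.trans h'.2
  case aleaf.aleaf s s' =>
    by_contra hne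
    exact disjoint_left.1 (g.Aleaves_disjoint s h.1 s' h'.1 hne) h.2 h'.2
  case orig.orig => exact g.orig_inj (h.symm.trans h')
  case p.p v v' =>
    by_contra hne
    exact disjoint_left.1 (g.P_disjoint v v' hne) h h'
  case x.x e v e' v' =>
    simpa using g.x_inj e h.1 v h.2.1 e' h'.1 v' h'.2.1 (h.2.2.symm.trans h'.2.2)
  case y.y e e' =>
    by_contra hne
    exact disjoint_left.1 (g.Y_disjoint e h.1 e' h'.1 hne) h.2 h'.2
  case z.z e e' =>
    by_contra hne
    exact disjoint_left.1 (g.Z_disjoint e h.1 e' h'.1 hne) h.2 h'.2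
  case q.q e i e' i' =>
    simpa using g.q_inj e h.1 i e' h'.1 i' (h.2.symm.trans h'.2)

lemma HasRole.ne (ha : g.HasRole a r)
    (hb : g.HasRole b r') (hr : r ≠ r') : a ≠ b := by
  rintro rfl
  exact hr (ha.unique hb)

lemma exists_hasRole (a : g.VH) : ∃ r, g.HasRole a r := by
  obtain ⟨p, hp, ha⟩ := g.parts_cover a
  simp only [GadgetData.parts, List.mem_cons, List.not_mem_nil, or_false] at hp
  rcases hp with rfl | rfl | rfl | rfl | rfl | rfl | rfl | rfl | rfl | rfl
  · exact ⟨.sstar, mem_singleton.1 ha⟩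
  · by_cases hL : ∃ e ∈ G.edgeFinset, ∃ v ∈ e, a ∈ g.L e v
    · obtain ⟨e, he, v, hv, haL⟩ := hL
      exact ⟨.lleaf e v, he, hv, haL⟩
    · exact ⟨.sleaf, ha, fun e he v hv h => hL ⟨e, he, v, hv, h⟩⟩
  · exact ⟨.acenter a, ha, rfl⟩
  · obtain ⟨s, hs, has⟩ := mem_biUnion.1 ha
    exact ⟨.aleaf s, hs, has⟩
  · obtain ⟨v, -, rfl⟩ := mem_image.1 ha
    exact ⟨.orig v, rfl⟩
  · obtain ⟨v, -, hv⟩ := mem_biUnion.1 ha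
    exact ⟨.p v, hv⟩
  · simp only [GadgetData.Xset, mem_biUnion, mem_image, mem_filter, mem_univ, true_and] at ha
    obtain ⟨e, he, v, hv, rfl⟩ := ha
    exact ⟨.x e v, he, hv, rfl⟩
  · obtain ⟨e, he, hy⟩ := mem_biUnion.1 ha
    exact ⟨.y e, he, hy⟩
  · obtain ⟨e, he, hz⟩ := mem_biUnion.1 ha
    exact ⟨.z e, he, hz⟩
  · simp only [GadgetData.Qset, mem_biUnion, mem_insert, mem_singleton] at ha
    obtain ⟨e, he, rfl | rfl⟩ := ha
    exacts [⟨.q e 0, he, rfl⟩, ⟨.q e 1, he, rfl⟩]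

lemma HasRole.adj_of_adjSpec (ha : g.HasRole a r) (hb : g.HasRole b r') (hab : g.AdjSpec a b) :
    r.Adj r' := by
  rcases hab with ⟨rfl, hb'⟩ | ⟨s, hs, rfl, hb'⟩ | ⟨v, rfl, hb'⟩ |
    ⟨e, he, v, hv, rfl, hb' | hb'⟩ | ⟨e, he, v, hv, rfl, hb' | hb' | hb'⟩ | ⟨e, he, rfl, rfl⟩ |
    ⟨e, he, i, rfl, hb' | ⟨v, hv, hb'⟩ | ⟨v, hv, rfl⟩⟩
  · have hpart := eq_of_mem_parts hb.mem_parts (j := 1) (by simpa [GadgetData.parts] using hb')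
    rw [ha.unique (r' := .sstar) rfl]
    cases r' <;> simp_all [GadgetRole.part, GadgetRole.Adj]
  · rw [ha.unique (r' := .acenter _) ⟨hs, rfl⟩, hb.unique (r' := .aleaf a) ⟨hs, hb'⟩]
    simp [GadgetRole.Adj]
  · rw [ha.unique (r' := .orig v) rfl, hb.unique (r' := .p v) hb']
    simp [GadgetRole.Adj]
  · rw [ha.unique (r' := .orig v) rfl, hb.unique (r' := .lleaf e v) ⟨he, hv, hb'⟩]
    simp [GadgetRole.Adj]
  · rw [ha.unique (r' := .orig v) rfl, hb.unique (r' := .y e) ⟨he, hb'⟩]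
    simpa [GadgetRole.Adj] using hv
  · rw [ha.unique (r' := .x e v) ⟨he, hv, rfl⟩, hb.unique (r' := .y e) ⟨he, hb'⟩]
    simp [GadgetRole.Adj]
  · rw [ha.unique (r' := .x e v) ⟨he, hv, rfl⟩, hb.unique (r' := .z e) ⟨he, hb'⟩]
    simp [GadgetRole.Adj]
  · rw [ha.unique (r' := .x e v) ⟨he, hv, rfl⟩, hb.unique (r' := .lleaf e v) ⟨he, hv, hb'⟩]
    simp [GadgetRole.Adj]
  · rw [ha.unique (r' := .q e 0) ⟨he, rfl⟩, hb.unique (r' := .q e 1) ⟨he, rfl⟩]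
    simp [GadgetRole.Adj]
  · rw [ha.unique (r' := .q e i) ⟨he, rfl⟩, hb.unique (r' := .z e) ⟨he, hb'⟩]
    simp [GadgetRole.Adj]
  · rw [ha.unique (r' := .q e i) ⟨he, rfl⟩, hb.unique (r' := .lleaf e v) ⟨he, hv, hb'⟩]
    simp [GadgetRole.Adj]
  · rw [ha.unique (r' := .q e i) ⟨he, rfl⟩, hb.unique (r' := .x e v) ⟨he, hv, rfl⟩]
    simp [GadgetRole.Adj]

lemma HasRole.adj (ha : g.HasRole a r)
    (hb : g.HasRole b r') (hab : g.H.Adj a b) : r.Adj r' ∨ r'.Adj r :=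
  ((g.adj_iff a b).1 hab).imp (ha.adj_of_adjSpec hb) (hb.adj_of_adjSpec ha)

lemma HasRole.exists_adj (ha : g.HasRole a r) (hab : g.H.Adj a b) :
    ∃ r', g.HasRole b r' ∧ (r.Adj r' ∨ r'.Adj r) :=
  (g.exists_hasRole b).imp fun _ hb => ⟨hb, ha.adj hb hab⟩

lemma hasRole_x (he : e ∈ G.edgeFinset) (hu : u ∈ e) : g.HasRole (g.x e u) (.x e u) :=
  ⟨he, hu, rfl⟩

lemma hasRole_orig (v : V) : g.HasRole (g.orig v) (.orig v) :=
  rfl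

lemma hasRole_q (he : e ∈ G.edgeFinset) (i : Fin 2) : g.HasRole (g.q e i) (.q e i) :=
  ⟨he, rfl⟩

lemma hasRole_of_mem_L (he : e ∈ G.edgeFinset) (hu : u ∈ e) (hb : b ∈ g.L e u) :
    g.HasRole b (.lleaf e u) :=
  ⟨he, hu, hb⟩

lemma hasRole_of_mem_Y (he : e ∈ G.edgeFinset) (hb : b ∈ g.Y e) : g.HasRole b (.y e) :=
  ⟨he, hb⟩

lemma HasRole.mem_bigSet (hr : g.HasRole a r) (hbig : r.part ∈ ({0, 2, 4, 6, 9} : Finset ℕ)) :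
    a ∈ g.bigSet := by
  have hmem := hr.mem_parts
  simp only [mem_insert, mem_singleton] at hbig
  rcases hbig with h | h | h | h | h <;> rw [h] at hmem <;>
    simp_all [GadgetData.parts, GadgetData.bigSet]

lemma exists_card_le_five_of_notMem_bigSet (ha : a ∉ g.bigSet) :
    ∃ T : Finset g.VH, #T ≤ 5 ∧ ∀ b, g.H.Adj a b → b ∈ T := by
  obtain ⟨r, hr⟩ := g.exists_hasRole a
  have hcard : ∀ e : Sym2 V, ∀ f : V → g.VH, #(e.toFinset.image f) ≤ 2 :=
    fun e f => card_image_le.trans e.card_toFinset_le_two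
  have hmem : ∀ {e : Sym2 V} {u : V} (f : V → g.VH), u ∈ e → f u ∈ e.toFinset.image f :=
    fun f hu => mem_image_of_mem f (Sym2.mem_toFinset.2 hu)
  cases r with
  | sleaf =>
    refine ⟨{g.sstar}, by simp, fun b hab => ?_⟩
    obtain ⟨r', hb, hadj⟩ := hr.exists_adj hab
    cases r' <;> simp_all [GadgetRole.Adj, HasRole]
  | lleaf e v =>
    refine ⟨{g.sstar, g.orig v, g.x e v, g.q e 0, g.q e 1}, card_le_five, fun b hab => ?_⟩
    obtain ⟨r', hb, hadj⟩ := hr.exists_adj hab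
    cases r' <;> simp only [HasRole, GadgetRole.Adj, or_false, false_or] at hb hadj <;>
      simp only [hb, mem_insert, mem_singleton, true_or]
    case orig => exact .inr (.inl (congrArg _ hadj))
    case x => exact .inr (.inr (.inl (by rw [hadj.1, hadj.2])))
    case q f i => subst hadj; fin_cases i <;> simp
  | aleaf s =>
    refine ⟨{s}, by simp, fun b hab => ?_⟩
    obtain ⟨r', hb, hadj⟩ := hr.exists_adj hab
    cases r' <;> simp_all [GadgetRole.Adj, HasRole]
  | p v =>
    refine ⟨{g.orig v}, by simp, fun b hab => ?_⟩
    obtain ⟨r', hb, hadj⟩ := hr.exists_adj hab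
    cases r' <;> simp_all [GadgetRole.Adj, HasRole]
  | y e =>
    refine ⟨e.toFinset.image g.orig ∪ e.toFinset.image (g.x e),
      (card_union_le _ _).trans (by grw [hcard, hcard]; norm_num), fun b hab => ?_⟩
    obtain ⟨r', hb, hadj⟩ := hr.exists_adj hab
    cases r' <;> simp only [HasRole, GadgetRole.Adj, or_false, false_or] at hb hadj
    case orig w => exact mem_union_left _ (hb ▸ hmem _ hadj)
    case x f w => obtain ⟨-, hw, rfl⟩ := hb; subst hadj; exact mem_union_right _ (hmem _ hw)
  | z e =>
    refine ⟨{g.q e 0, g.q e 1} ∪ e.toFinset.image (g.x e),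
      (card_union_le _ _).trans (by grw [card_le_two, hcard]; norm_num), fun b hab => ?_⟩
    obtain ⟨r', hb, hadj⟩ := hr.exists_adj hab
    cases r' <;> simp only [HasRole, GadgetRole.Adj, or_false, false_or] at hb hadj
    case x f w => obtain ⟨-, hw, rfl⟩ := hb; subst hadj; exact mem_union_right _ (hmem _ hw)
    case q f i => obtain ⟨-, rfl⟩ := hb; subst hadj; fin_cases i <;> simp
  | sstar | acenter _ | orig _ | x _ _ | q _ _ =>
    exact absurd (hr.mem_bigSet (by simp [GadgetRole.part])) ha

variable (g) in
/-- The neighbours that `x e u` and `x e v` have in common. -/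
def sharedNbhd (e : Sym2 V) : Finset g.VH := g.Y e ∪ g.Z e ∪ {g.q e 0, g.q e 1}

lemma mem_L_or_mem_sharedNbhd_of_adj (he : e ∈ G.edgeFinset) (hu : u ∈ e)
    (hab : g.H.Adj (g.x e u) b) : b ∈ g.L e u ∨ b ∈ g.sharedNbhd e := by
  obtain ⟨r', hb, hadj⟩ := (hasRole_x he hu).exists_adj hab
  cases r' <;> simp only [HasRole, GadgetRole.Adj, or_false, false_or] at hb hadj
  case lleaf f w => obtain ⟨rfl, rfl⟩ := hadj; exact .inl hb.2.2
  case y f => subst hadj; exact .inr (by simp [sharedNbhd, hb.2])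
  case z f => subst hadj; exact .inr (by simp [sharedNbhd, hb.2])
  case q f i => subst hadj; rw [hb.2]; right; fin_cases i <;> simp [sharedNbhd]

lemma adj_x_of_mem_L (he : e ∈ G.edgeFinset) (hu : u ∈ e) (hb : b ∈ g.L e u) :
    g.H.Adj (g.x e u) b :=
  (g.adj_iff _ _).2 (.inl (.inr (.inr (.inr (.inr (.inl ⟨e, he, u, hu, rfl, .inr (.inr hb)⟩))))))

lemma adj_x_of_mem_sharedNbhd (he : e ∈ G.edgeFinset) (hu : u ∈ e) (hb : b ∈ g.sharedNbhd e) :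
    g.H.Adj (g.x e u) b := by
  simp only [sharedNbhd, mem_union, mem_insert, mem_singleton] at hb
  rcases hb with (hb | hb) | rfl | rfl
  · exact (g.adj_iff _ _).2 (.inl (.inr (.inr (.inr (.inr (.inl ⟨e, he, u, hu, rfl, .inl hb⟩))))))
  · exact (g.adj_iff _ _).2
      (.inl (.inr (.inr (.inr (.inr (.inl ⟨e, he, u, hu, rfl, .inr (.inl hb)⟩))))))
  all_goals refine (g.adj_iff _ _).2 (.inr (.inr (.inr (.inr (.inr (.inr (.inr ?_)))))))
  all_goals exact ⟨e, he, _, rfl, .inr (.inr ⟨u, hu, rfl⟩)⟩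

lemma notMem_L_of_mem_sharedNbhd (he : e ∈ G.edgeFinset) (hu : u ∈ e)
    (hb : b ∈ g.sharedNbhd e) : b ∉ g.L e u := fun hL => by
  have hl := hasRole_of_mem_L he hu hL
  simp only [sharedNbhd, mem_union, mem_insert, mem_singleton] at hb
  rcases hb with (hb | hb) | rfl | rfl
  · nomatch (hasRole_of_mem_Y he hb).unique hl
  · nomatch (show g.HasRole b (.z e) from ⟨he, hb⟩).unique hl
  · nomatch (hasRole_q he 0).unique hl
  · nomatch (hasRole_q he 1).unique hl

lemma card_L_union_sharedNbhd_le (he : e ∈ G.edgeFinset) (hu : u ∈ e) :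
    #(g.L e u ∪ g.sharedNbhd e) ≤ numColors G wt - 1 := by
  have := g.card_Z e he
  grw [sharedNbhd, card_union_le, card_union_le, card_union_le, card_le_two, g.card_L e he u hu,
    g.card_Y e he]
  omega

variable (g) in
def qNbhd (e : Sym2 V) (i : Fin 2) : Finset g.VH :=
  insert (g.q e i.rev) (g.Z e ∪ e.toFinset.biUnion fun w => insert (g.x e w) (g.L e w))

lemma x_mem_qNbhd (hu : u ∈ e) (i : Fin 2) : g.x e u ∈ g.qNbhd e i :=
  mem_insert_of_mem (mem_union_right _ (mem_biUnion.2 ⟨u, Sym2.mem_toFinset.2 hu,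
    mem_insert_self _ _⟩))

lemma mem_qNbhd_of_mem_L (hu : u ∈ e) (i : Fin 2) (hb : b ∈ g.L e u) : b ∈ g.qNbhd e i :=
  mem_insert_of_mem (mem_union_right _ (mem_biUnion.2 ⟨u, Sym2.mem_toFinset.2 hu,
    mem_insert_of_mem hb⟩))

lemma mem_qNbhd_of_adj (he : e ∈ G.edgeFinset) {i : Fin 2} (hab : g.H.Adj (g.q e i) b) :
    b ∈ g.qNbhd e i := by
  obtain ⟨r', hb, hadj⟩ := (hasRole_q he i).exists_adj hab
  cases r' <;> simp only [HasRole, GadgetRole.Adj, or_false] at hb hadj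
  case lleaf f w => subst hadj; exact mem_qNbhd_of_mem_L hb.2.1 i hb.2.2
  case x f w => subst hadj; rw [hb.2.2]; exact x_mem_qNbhd hb.2.1 i
  case z f => subst hadj; exact mem_insert_of_mem (mem_union_left _ hb.2)
  case q f j =>
    rw [hb.2]
    obtain ⟨rfl, rfl⟩ | ⟨rfl, rfl⟩ := hadj
    · exact mem_insert_self _ _
    · rw [qNbhd, Fin.rev_rev]; exact mem_insert_self _ _

lemma card_qNbhd_le (he : e ∈ G.edgeFinset) (i : Fin 2) : #(g.qNbhd e i) ≤ numColors G wt := by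
  have hZ := g.card_Z e he
  have hbiUnion : #(e.toFinset.biUnion fun w => insert (g.x e w) (g.L e w)) ≤ 2 * (wt e + 1) :=
    (card_biUnion_le_card_mul _ _ _ fun w hw => by
      grw [card_insert_le, g.card_L e he w (Sym2.mem_toFinset.1 hw)]).trans
    (Nat.mul_le_mul_right _ e.card_toFinset_le_two)
  grw [qNbhd, card_insert_le, card_union_le, hbiUnion]
  omega

lemma mem_origNbhd_of_adj (hab : g.H.Adj (g.orig v) b) :
    b ∈ g.P v ∪ (G.edgeFinset.filter (v ∈ ·)).biUnion fun e => g.L e v ∪ g.Y e := by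
  obtain ⟨r', hb, hadj⟩ := (hasRole_orig v).exists_adj hab
  cases r' <;> simp only [HasRole, GadgetRole.Adj, or_false] at hb hadj
  case lleaf f w =>
    subst hadj
    exact mem_union_right _
      (mem_biUnion.2 ⟨f, mem_filter.2 ⟨hb.1, hb.2.1⟩, mem_union_left _ hb.2.2⟩)
  case p w => subst hadj; exact mem_union_left _ hb
  case y f =>
    exact mem_union_right _ (mem_biUnion.2 ⟨f, mem_filter.2 ⟨hb.1, hadj⟩, mem_union_right _ hb.2⟩)

lemma card_bigSet_le : #g.bigSet ≤ numColors G wt + #G.edgeFinset := by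
  have hQ : #g.Qset ≤ #G.edgeFinset * 2 :=
    card_biUnion_le_card_mul _ _ _ fun _ _ => card_le_two
  have hX : #g.Xset ≤ #G.edgeFinset * 2 := card_biUnion_le_card_mul _ _ _ fun e _ =>
    card_image_le.trans ((congrArg card (by ext; simp [Sym2.mem_toFinset])).trans_le
      e.card_toFinset_le_two)
  grw [GadgetData.bigSet, card_union_le, card_union_le, card_union_le, card_union_le,
    card_singleton, card_image_le, card_univ, hQ, hX, g.card_Acenters]
  unfold numColors
  omega

lemma mem_bigSet_of_isBVertex (hk : 7 ≤ numColors G wt) (hb : IsBVertex g.H c a) :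
    a ∈ g.bigSet := by
  by_contra ha
  obtain ⟨T, hT, hadj⟩ := exists_card_le_five_of_notMem_bigSet ha
  have := (hb.card_sub_one_le hadj).trans card_image_le
  omega

lemma card_le_of_forall_not_isBVertex (hc : IsBColoring g.H (numColors G wt) c)
    (hk : 7 ≤ numColors G wt) {F : Finset g.VH} (hF : F ⊆ g.bigSet)
    (hnb : ∀ a ∈ F, ¬IsBVertex g.H c a) : #F ≤ #G.edgeFinset := by
  choose f hfc hfb using hc.2.2
  have hf : Function.Injective f := fun i j hij => by rw [← hfc i, ← hfc j, hij]
  have hsub : univ.image f ⊆ g.bigSet \ F := fun a ha => by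
    obtain ⟨i, -, rfl⟩ := mem_image.1 ha
    exact mem_sdiff.2 ⟨mem_bigSet_of_isBVertex hk (hfb i), fun hi => hnb _ hi (hfb i)⟩
  have := card_le_card hsub
  rw [card_image_of_injective _ hf, card_univ, Fintype.card_fin, card_sdiff_of_subset hF] at this
  have := card_bigSet_le (g := g)
  omega

variable (g) in
def hubs (e : Sym2 V) : Finset g.VH :=
  insert (g.q e 0) (insert (g.q e 1) (e.toFinset.image (g.x e)))

lemma x_mem_hubs (hu : u ∈ e) : g.x e u ∈ g.hubs e :=
  mem_insert_of_mem (mem_insert_of_mem (mem_image_of_mem _ (Sym2.mem_toFinset.2 hu)))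

lemma q_mem_hubs (i : Fin 2) : g.q e i ∈ g.hubs e := by
  fin_cases i <;> simp [hubs]

lemma hasRole_of_mem_hubs (he : e ∈ G.edgeFinset) (ha : a ∈ g.hubs e) :
    (∃ u, g.HasRole a (.x e u)) ∨ ∃ i, g.HasRole a (.q e i) := by
  simp only [hubs, mem_insert, mem_image, Sym2.mem_toFinset] at ha
  rcases ha with rfl | rfl | ⟨u, hu, rfl⟩
  exacts [.inr ⟨0, hasRole_q he 0⟩, .inr ⟨1, hasRole_q he 1⟩, .inl ⟨u, hasRole_x he hu⟩]

lemma eq_of_mem_hubs {e' : Sym2 V} (he : e ∈ G.edgeFinset) (he' : e' ∈ G.edgeFinset)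
    (ha : a ∈ g.hubs e) (ha' : a ∈ g.hubs e') : e = e' := by
  rcases hasRole_of_mem_hubs he ha with ⟨u, hr⟩ | ⟨i, hr⟩ <;>
    rcases hasRole_of_mem_hubs he' ha' with ⟨u', hr'⟩ | ⟨i', hr'⟩ <;>
    have := hr.unique hr' <;> simp_all

lemma hubs_subset_bigSet (he : e ∈ G.edgeFinset) : g.hubs e ⊆ g.bigSet := fun a ha => by
  rcases hasRole_of_mem_hubs he ha with ⟨u, hr⟩ | ⟨i, hr⟩ <;>
    exact hr.mem_bigSet (by simp [GadgetRole.part])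

lemma not_adj_q_of_mem_Y (he : e ∈ G.edgeFinset) (hb : b ∈ g.Y e) (i : Fin 2) :
    ¬g.H.Adj (g.q e i) b := fun hab => by
  simpa [GadgetRole.Adj] using (hasRole_q he i).adj (hasRole_of_mem_Y he hb) hab

lemma injOn_L_union_sharedNbhd (he : e ∈ G.edgeFinset) (hu : u ∈ e)
    (hb : IsBVertex g.H c (g.x e u)) : Set.InjOn c ↑(g.L e u ∪ g.sharedNbhd e) :=
  hb.injOn (fun _ hab => mem_union.2 (mem_L_or_mem_sharedNbhd_of_adj he hu hab))
    (card_L_union_sharedNbhd_le he hu)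

lemma not_isBVertex_q_of_two_collisions (he : e ∈ G.edgeFinset) {i : Fin 2}
    {a₁ b₁ a₂ b₂ : g.VH} (ha₁ : a₁ ∈ g.qNbhd e i) (hb₁ : b₁ ∈ g.qNbhd e i)
    (ha₂ : a₂ ∈ g.qNbhd e i) (hb₂ : b₂ ∈ g.qNbhd e i) (h₁ : a₁ ≠ b₁) (h₂ : a₂ ≠ b₂)
    (ha₂b₁ : a₂ ≠ b₁) (hb₂b₁ : b₂ ≠ b₁) (hc₁ : c a₁ = c b₁) (hc₂ : c a₂ = c b₂) :
    ¬IsBVertex g.H c (g.q e i) := fun hb => by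
  have := hb.card_sub_one_le fun _ => mem_qNbhd_of_adj he
  have := card_image_add_two_le ha₁ hb₁ ha₂ hb₂ h₁ h₂ ha₂b₁ hb₂b₁ hc₁ hc₂
  have := card_qNbhd_le he i (g := g)
  have := seven_le_numColors he (wt := wt)
  omega

lemma exists_not_isBVertex_mem_hubs (hprop : ∀ ⦃a b : g.VH⦄, g.H.Adj a b → c a ≠ c b)
    (he : e ∈ G.edgeFinset) (hw : 1 ≤ wt e) : ∃ a ∈ g.hubs e, ¬IsBVertex g.H c a := by
  obtain ⟨u, v, huv, rfl⟩ := SimpleGraph.exists_adj_of_mem_edgeFinset he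
  have hu : u ∈ s(u, v) := Sym2.mem_mk_left u v
  have hv : v ∈ s(u, v) := Sym2.mem_mk_right u v
  by_contra! hall
  have hbu := hall _ (x_mem_hubs hu)
  have hbv := hall _ (x_mem_hubs hv)
  have hinj := injOn_L_union_sharedNbhd he hu hbu
  have hbq := hall _ (q_mem_hubs 0)
  have hx_ne : g.x s(u, v) u ≠ g.x s(u, v) v :=
    (hasRole_x he hu).ne (hasRole_x he hv) (by simp [huv.ne])
  have hL_ne_x : ∀ {w w' : V} {b : g.VH}, w ∈ s(u, v) → w' ∈ s(u, v) → b ∈ g.L s(u, v) w →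
      b ≠ g.x s(u, v) w' := fun hw hw' hb =>
    (hasRole_of_mem_L he hw hb).ne (hasRole_x he hw') (by simp)
  -- The two colour repetitions in the neighbourhood of `q e 0`: `(x u, x v)` and `(a, b)` with
  -- `a ∈ L e u`, `b ∈ L e v` if `x u` and `x v` share their colour, else `(b₁, x v)` and
  -- `(b₂, x u)` with `b₁ ∈ L e u`, `b₂ ∈ L e v`.
  by_cases hx : c (g.x s(u, v) u) = c (g.x s(u, v) v)
  · obtain ⟨a, ha⟩ : (g.L s(u, v) u).Nonempty := card_pos.1 (by rw [g.card_L _ he u hu]; omega)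
    obtain ⟨b, hab, hcb⟩ := hbv (c a) (hx ▸ (hprop (adj_x_of_mem_L he hu ha)).symm)
    have hb : b ∈ g.L s(u, v) v := (mem_L_or_mem_sharedNbhd_of_adj he hv hab).resolve_right
      fun hS => notMem_L_of_mem_sharedNbhd he hu hS
        (hinj (mem_union_right _ hS) (mem_union_left _ ha) hcb ▸ ha)
    exact not_isBVertex_q_of_two_collisions he (x_mem_qNbhd hu 0) (x_mem_qNbhd hv 0)
      (mem_qNbhd_of_mem_L hu 0 ha) (mem_qNbhd_of_mem_L hv 0 hb) hx_ne
      ((hasRole_of_mem_L he hu ha).ne (hasRole_of_mem_L he hv hb) (by simp [huv.ne]))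
      (hL_ne_x hu hv ha) (hL_ne_x hv hv hb) hx hcb.symm hbq
  · obtain ⟨b₁, hab₁, hcb₁⟩ := hbu (c (g.x s(u, v) v)) (Ne.symm hx)
    have hb₁ : b₁ ∈ g.L s(u, v) u := (mem_L_or_mem_sharedNbhd_of_adj he hu hab₁).resolve_right
      fun hS => hprop (adj_x_of_mem_sharedNbhd he hv hS) hcb₁.symm
    obtain ⟨b₂, hab₂, hcb₂⟩ := hbv (c (g.x s(u, v) u)) hx
    have hb₂ : b₂ ∈ g.L s(u, v) v := (mem_L_or_mem_sharedNbhd_of_adj he hv hab₂).resolve_right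
      fun hS => hprop (adj_x_of_mem_sharedNbhd he hu hS) hcb₂.symm
    exact not_isBVertex_q_of_two_collisions he (mem_qNbhd_of_mem_L hu 0 hb₁) (x_mem_qNbhd hv 0)
      (mem_qNbhd_of_mem_L hv 0 hb₂) (x_mem_qNbhd hu 0) (hL_ne_x hu hv hb₁) (hL_ne_x hv hu hb₂)
      (hL_ne_x hv hv hb₂) hx_ne hcb₁ hcb₂ hbq

lemma card_add_card_le_of_not_isBVertex (hc : IsBColoring g.H (numColors G wt) c)
    (hwt : ∀ e ∈ G.edgeFinset, 1 ≤ wt e) (hk : 7 ≤ numColors G wt)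
    {D : Finset (Sym2 V)} (hD : D ⊆ G.edgeFinset) {F : Finset g.VH} (hF : F ⊆ g.bigSet)
    (hnb : ∀ a ∈ F, ¬IsBVertex g.H c a) (hdisj : ∀ e ∈ D, Disjoint F (g.hubs e)) :
    #F + #D ≤ #G.edgeFinset := by
  have : Nonempty g.VH := ⟨g.sstar⟩
  choose! f hf hfb using fun e he => exists_not_isBVertex_mem_hubs hc.1 he (hwt e he)
  have hinj : Set.InjOn f D := fun e he e' he' h =>
    eq_of_mem_hubs (hD he) (hD he') (hf e (hD he)) (h ▸ hf e' (hD he'))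
  have hdisj' : Disjoint F (D.image f) := disjoint_right.2 fun a ha => by
    obtain ⟨e, he, rfl⟩ := mem_image.1 ha
    exact disjoint_right.1 (hdisj e he) (hf e (hD he))
  have := card_le_of_forall_not_isBVertex hc hk (F := F ∪ D.image f)
    (union_subset hF fun a ha => by
      obtain ⟨e, he, rfl⟩ := mem_image.1 ha
      exact hubs_subset_bigSet (hD he) (hf e (hD he)))
    (by
      simp only [mem_union, mem_image]
      rintro a (ha | ⟨e, he, rfl⟩)
      exacts [hnb a ha, hfb e (hD he)])
  rwa [card_union_of_disjoint hdisj', card_image_of_injOn hinj] at this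

lemma orig_isBVertex (hc : IsBColoring g.H (numColors G wt) c)
    (hwt : ∀ e ∈ G.edgeFinset, 1 ≤ wt e) (hk : 7 ≤ numColors G wt) (v : V) :
    IsBVertex g.H c (g.orig v) := by
  by_contra hnb
  have := card_add_card_le_of_not_isBVertex hc hwt hk subset_rfl
    (singleton_subset_iff.2 ((hasRole_orig v).mem_bigSet (by simp [GadgetRole.part])))
    (by simpa using hnb)
    fun e he => disjoint_singleton_left.2 fun h => by
      rcases hasRole_of_mem_hubs he h with ⟨u, hr⟩ | ⟨i, hr⟩ <;>
        nomatch (hasRole_orig v).unique hr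
  simp at this

lemma exists_q_isBVertex (hc : IsBColoring g.H (numColors G wt) c)
    (hwt : ∀ e ∈ G.edgeFinset, 1 ≤ wt e) (he : e ∈ G.edgeFinset) :
    ∃ i, IsBVertex g.H c (g.q e i) := by
  by_contra! hq
  have hq01 : g.q e 0 ≠ g.q e 1 := (hasRole_q he 0).ne (hasRole_q he 1) (by simp)
  have := card_add_card_le_of_not_isBVertex hc hwt (seven_le_numColors he) (erase_subset e _)
    (F := {g.q e 0, g.q e 1})
    (by
      simp only [insert_subset_iff, singleton_subset_iff]
      exact ⟨(hasRole_q he 0).mem_bigSet (by simp [GadgetRole.part]),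
        (hasRole_q he 1).mem_bigSet (by simp [GadgetRole.part])⟩)
    (by simpa using ⟨hq 0, hq 1⟩)
    fun e' he' => disjoint_left.2 fun a ha ha' => (ne_of_mem_erase he') <| by
      simp only [mem_insert, mem_singleton] at ha
      rcases ha with rfl | rfl
      exacts [(eq_of_mem_hubs he (mem_of_mem_erase he') (q_mem_hubs 0) ha').symm,
        (eq_of_mem_hubs he (mem_of_mem_erase he') (q_mem_hubs 1) ha').symm]
  rw [card_pair hq01, card_erase_of_mem he] at this
  have := card_pos.2 ⟨e, he⟩
  omega

lemma image_Y_subset_image_L (hprop : ∀ ⦃a b : g.VH⦄, g.H.Adj a b → c a ≠ c b)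
    (he : e ∈ G.edgeFinset) (hu : u ∈ e) (hv : v ∈ e) (huv : u ≠ v)
    (hbx : IsBVertex g.H c (g.x e u)) {i : Fin 2} (hbq : IsBVertex g.H c (g.q e i)) :
    (g.Y e).image c ⊆ (g.L e v).image c := by
  have hinj := injOn_L_union_sharedNbhd he hu hbx
  rintro _ hy'
  obtain ⟨y, hy, rfl⟩ := mem_image.1 hy'
  have hyS : y ∈ g.sharedNbhd e := by simp [sharedNbhd, hy]
  have hqS : ∀ j, g.q e j ∈ g.sharedNbhd e := fun j => by fin_cases j <;> simp [sharedNbhd]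
  have hfar : ∀ w ∈ g.L e u ∪ g.sharedNbhd e, g.H.Adj (g.q e i) w → c w ≠ c y :=
    fun w hw hqw hcw =>
      not_adj_q_of_mem_Y he hy i (hinj hw (mem_union_right _ hyS) hcw ▸ hqw)
  obtain ⟨w, hqw, hcw⟩ := hbq (c y) fun h => (hasRole_of_mem_Y he hy).ne (hasRole_q he i)
    (by simp) (hinj (mem_union_right _ hyS) (mem_union_right _ (hqS i)) h)
  have hw := mem_qNbhd_of_adj he hqw
  simp only [qNbhd, mem_insert, mem_union, mem_biUnion, Sym2.mem_toFinset] at hw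
  rcases hw with rfl | hwZ | ⟨w', hw', rfl | hwL⟩
  · exact absurd hcw (hfar _ (mem_union_right _ (hqS _)) hqw)
  · exact absurd hcw (hfar _ (mem_union_right _ (by simp [sharedNbhd, hwZ])) hqw)
  · exact absurd hcw (hprop (adj_x_of_mem_sharedNbhd he hw' hyS))
  · obtain rfl | rfl : w' = u ∨ w' = v := by
      rwa [(Sym2.mem_and_mem_iff huv).1 ⟨hu, hv⟩, Sym2.mem_iff] at hw'
    · exact absurd hcw (hfar _ (mem_union_left _ hwL) hqw)
    · exact hcw ▸ mem_image_of_mem c hwL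

lemma card_image_L_union_Y_le {o : Sym2 V → V} (hc : IsBColoring g.H (numColors G wt) c)
    (hwt : ∀ e ∈ G.edgeFinset, 1 ≤ wt e)
    (ho : ∀ e ∈ G.edgeFinset, o e ∈ e ∧ IsBVertex g.H c (g.x e (o e)))
    (he : e ∈ G.edgeFinset) (hv : v ∈ e) :
    #((g.L e v ∪ g.Y e).image c) ≤ if o e = v then 2 * wt e else wt e := by
  split_ifs with hov
  · grw [card_image_le, card_union_le, g.card_L e he v hv, g.card_Y e he]
    omega
  · obtain ⟨i, hbq⟩ := exists_q_isBVertex hc hwt he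
    rw [image_union, union_eq_left.2
      (image_Y_subset_image_L hc.1 he (ho e he).1 hv hov (ho e he).2 hbq)]
    exact card_image_le.trans (g.card_L e he v hv).le

lemma vertW_le_two_mul_inWeight {o : Sym2 V → V} (hc : IsBColoring g.H (numColors G wt) c)
    (hwt : ∀ e ∈ G.edgeFinset, 1 ≤ wt e)
    (ho : ∀ e ∈ G.edgeFinset, o e ∈ e ∧ IsBVertex g.H c (g.x e (o e))) (v : V) :
    vertW G wt v ≤ 2 * inWeight G wt o v := by
  rcases (G.edgeFinset.filter (v ∈ ·)).eq_empty_or_nonempty with h | ⟨e, he⟩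
  · simp [vertW, h]
  have hlow := (orig_isBVertex hc hwt (seven_le_numColors (mem_filter.1 he).1) v).card_sub_one_le
    fun _ => mem_origNbhd_of_adj
  have hup : #((g.P v ∪ (G.edgeFinset.filter (v ∈ ·)).biUnion fun e => g.L e v ∪ g.Y e).image c)
      ≤ #(g.P v) + (vertW G wt v + inWeight G wt o v) := by
    rw [image_union, biUnion_image, ← sum_ite_eq_vertW_add_inWeight G wt o v]
    grw [card_union_le, card_image_le, card_biUnion_le]
    exact Nat.add_le_add_left (sum_le_sum fun e he =>
      card_image_L_union_Y_le (v := v) hc hwt ho (mem_filter.1 he).1 (mem_filter.1 he).2) _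
  have := g.card_P v
  omega

end Gadget

theorem orientation_from_bColoring_is_circulating_general
    {V : Type*} [Fintype V] [DecidableEq V] (G : SimpleGraph V) [DecidableRel G.Adj]
    (wt : Sym2 V → ℕ)
    (hwt : ∀ e ∈ G.edgeFinset, 1 ≤ wt e)
    (g : Gadget V G wt)
    (c : g.VH → Fin (numColors G wt)) (hc : IsBColoring g.H (numColors G wt) c)
    (o : Sym2 V → V)
    (ho : ∀ e ∈ G.edgeFinset, o e ∈ e ∧ IsBVertex g.H c (g.x e (o e))) :
    (∀ v : V,
      ∑ e ∈ G.edgeFinset.filter (fun e => v ∈ e ∧ o e = v), wt e = vertW G wt v / 2) ∧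
    IsCirculating G wt o := by
  have hhalf := two_mul_inWeight_eq G wt o (fun e he => (ho e he).1)
    (Gadget.vertW_le_two_mul_inWeight hc hwt ho)
  exact ⟨fun v => show inWeight G wt o v = _ by have := hhalf v; omega,
    isCirculating_of_two_mul_inWeight_eq G wt o (fun e he => (ho e he).1) hhalf⟩

/-- Given a b-coloring of `H` with `k` colors, orienting each edge `e = uv`
towards the endpoint whose `x`-vertex is a b-vertex yields, for every vertex `v`, total
incoming weight `W_v / 2`; in particular this orientation is circulating. -/
theorem orientation_from_bColoring_is_circulating
    {V : Type*} [Fintype V] [DecidableEq V] (G : SimpleGraph V) [DecidableRel G.Adj]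
    (wt : Sym2 V → ℕ) (hconn : G.Connected)
    (hwt : ∀ e ∈ G.edgeFinset, 1 ≤ wt e)
    (heven : ∀ v : V, Even (vertW G wt v))
    (g : Gadget V G wt)
    (c : g.VH → Fin (numColors G wt)) (hc : IsBColoring g.H (numColors G wt) c)
    (o : Sym2 V → V)
    (ho : ∀ e ∈ G.edgeFinset, o e ∈ e ∧ IsBVertex g.H c (g.x e (o e))) :
    (∀ v : V,
      ∑ e ∈ G.edgeFinset.filter (fun e => v ∈ e ∧ o e = v), wt e = vertW G wt v / 2) ∧
    IsCirculating G wt o :=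
  orientation_from_bColoring_is_circulating_general G wt hwt g c hc o ho
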